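/- Let $u : [0,T] \to [0,\infty)$ be integrable and $0 < b \le e^{-1}$. Then the function $\psi_b(t) := b^{\exp(\int_t^T u(s)\,ds)}$ solves the backward ODE $\psi_b(t) = b + \int_t^T u(s)\, \psi_b(s) \ln(\psi_b(s))\, ds$ for all $t \in [0,T]$, and satisfies $0 < \psi_b(t) \le b$ for all $t \in [0,T]$. -/

import Mathlib

open MeasureTheory Set intervalIntegral

lemma key_ftc (t T : ℝ) (htT : t ≤ T) (u : ℝ → ℝ)
    (hu : MeasureTheory.IntegrableOn u (Set.Icc t T))
    (hu0 : ∀ s ∈ Set.Icc t T, 0 ≤ u s)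
    (φ φ' : ℝ → ℝ) (hφ : ∀ x, HasDerivAt φ (φ' x) x) (hφ' : Continuous φ') :
    ∫ s in t..T, u s * φ' (∫ r in s..T, u r) = φ (∫ r in t..T, u r) - φ 0 := by
  rcases eq_or_lt_of_le htT with rfl | hlt
  · simp
  set F : ℝ → ℝ := fun s => ∫ r in s..T, u r with hF
  have hInt : ∀ a b, a ∈ Icc t T → b ∈ Icc t T → IntervalIntegrable u volume a b := by
    intro a b ha hb
    apply (hu.mono_set _).intervalIntegrable
    rw [← uIcc_of_le htT]
    exact uIcc_subset_uIcc (by rw [uIcc_of_le htT]; exact ha) (by rw [uIcc_of_le htT]; exact hb)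
  have hFdiff : ∀ a b, t ≤ a → a ≤ b → b ≤ T → F a - F b = ∫ s in a..b, u s := by
    intro a b ha hab hb
    have h1 := integral_add_adjacent_intervals
      (hInt a b ⟨ha, hab.trans hb⟩ ⟨ha.trans hab, hb⟩)
      (hInt b T ⟨ha.trans hab, hb⟩ ⟨htT, le_rfl⟩)
    simp only [hF]
    linarith
  have hFT : F T = 0 := integral_same
  have hFmono : ∀ a b, t ≤ a → a ≤ b → b ≤ T → F b ≤ F a := by
    intro a b ha hab hb
    have h1 := hFdiff a b ha hab hb
    have h2 : 0 ≤ ∫ s in a..b, u s :=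
      intervalIntegral.integral_nonneg hab (fun x hx => hu0 x ⟨ha.trans hx.1, hx.2.trans hb⟩)
    linarith
  have hFcont : ContinuousOn F (Icc t T) := by
    have hc : ContinuousOn (fun s => (∫ r in t..T, u r) - ∫ r in t..s, u r) (Icc t T) := by
      refine continuousOn_const.sub ?_
      have := intervalIntegral.continuousOn_primitive_interval
        (f := u) (a := t) (b := T) (μ := volume) (by rwa [uIcc_of_le htT])
      rwa [uIcc_of_le htT] at this
    refine hc.congr ?_
    intro s hs
    have h1 := integral_add_adjacent_intervals
      (hInt t s ⟨le_rfl, htT⟩ hs) (hInt s T hs ⟨htT, le_rfl⟩)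
    simp only [hF]
    linarith
  set g : ℝ → ℝ := fun s => φ' (F s) with hgdef
  have hg : ContinuousOn g (Icc t T) := hφ'.comp_continuousOn hFcont
  have hug : ∀ a b, a ∈ Icc t T → b ∈ Icc t T →
      IntervalIntegrable (fun s => u s * g s) volume a b := by
    intro a b ha hb
    refine (hInt a b ha hb).mul_continuousOn (hg.mono ?_)
    rw [← uIcc_of_le htT]
    exact uIcc_subset_uIcc (by rw [uIcc_of_le htT]; exact ha) (by rw [uIcc_of_le htT]; exact hb)
  apply eq_of_forall_dist_le
  intro ε hε
  rw [Real.dist_eq]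
  set C := F t with hC
  have hC0 : 0 ≤ C := by
    have h := hFmono t T le_rfl htT le_rfl
    rw [hFT] at h
    exact h
  set ε₀ := ε / (2 * C + 1) with hε₀def
  have hε₀ : 0 < ε₀ := div_pos hε (by linarith)
  obtain ⟨δ, hδ, Hδ⟩ := Metric.uniformContinuousOn_iff.1
    (isCompact_Icc.uniformContinuousOn_of_continuous hg) ε₀ hε₀
  obtain ⟨N, hN⟩ := exists_nat_gt ((T - t) / δ)
  have hTt : 0 < T - t := sub_pos.2 hlt
  have hN0 : 0 < (N : ℝ) := lt_trans (div_pos hTt hδ) hN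
  set h : ℝ := (T - t) / N with hhdef
  have hh : 0 < h := div_pos hTt hN0
  have hNh : (N : ℝ) * h = T - t := by
    rw [hhdef]
    field_simp
  have hmesh : h < δ := by
    rw [hhdef, div_lt_iff₀ hN0]
    have := (div_lt_iff₀ hδ).1 hN
    linarith [mul_pos hδ hN0]
  set x : ℕ → ℝ := fun i => t + i * h with hxdef
  have hx0 : x 0 = t := by simp [hxdef]
  have hxN : x N = T := by
    simp only [hxdef]
    linarith
  have hxmem : ∀ i, i ≤ N → x i ∈ Icc t T := by
    intro i hi
    have hi' : (i : ℝ) ≤ N := Nat.cast_le.2 hi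
    have h1 : (i : ℝ) * h ≤ N * h := mul_le_mul_of_nonneg_right hi' hh.le
    constructor
    · simp only [hxdef]
      nlinarith [(Nat.cast_nonneg i : (0:ℝ) ≤ (i:ℝ))]
    · simp only [hxdef]
      linarith
  have piece : ∀ i < N,
      |(∫ s in x i..x (i + 1), u s * g s) - (φ (F (x i)) - φ (F (x (i + 1))))|
        ≤ 2 * ε₀ * (F (x i) - F (x (i + 1))) := by
    intro i hi
    set a := x i with hadef
    set b := x (i + 1) with hbdef
    have hai : a ∈ Icc t T := hxmem i hi.le
    have hbi : b ∈ Icc t T := hxmem (i + 1) hi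
    have hba : b - a = h := by
      simp only [hadef, hbdef, hxdef]
      push_cast
      ring
    have hab : a ≤ b := by linarith
    set D := F a - F b with hD
    have hDeq : D = ∫ s in a..b, u s := hFdiff a b hai.1 hab hbi.2
    have hD0 : 0 ≤ D := by
      have := hFmono a b hai.1 hab hbi.2
      rw [hD]
      linarith
    have hgb : ∀ s ∈ Icc a b, |g s - g a| ≤ ε₀ := by
      intro s hs
      have hsmem : s ∈ Icc t T := ⟨hai.1.trans hs.1, hs.2.trans hbi.2⟩
      have hd : dist s a < δ := by
        rw [Real.dist_eq, abs_of_nonneg (sub_nonneg.2 hs.1)]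
        have : s - a ≤ b - a := by linarith [hs.2]
        linarith [hba ▸ this]
      have := Hδ s hsmem a hai hd
      rw [Real.dist_eq] at this
      exact this.le
    have hφ'b : ∀ y ∈ Icc (F b) (F a), |φ' y - g a| ≤ ε₀ := by
      intro y hy
      have hsub : Icc a b ⊆ Icc t T := Icc_subset_Icc hai.1 hbi.2
      obtain ⟨s, hs, hsy⟩ := intermediate_value_Icc' hab (hFcont.mono hsub) hy
      rw [← hsy]
      exact hgb s hs
    have hintu : IntervalIntegrable u volume a b := hInt a b hai hbi
    have hintug : IntervalIntegrable (fun s => u s * g s) volume a b := hug a b hai hbi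
    have hintuga : IntervalIntegrable (fun s => u s * g a) volume a b := hintu.mul_const _
    have E1 : ∫ s in a..b, u s * (g s - g a)
        = (∫ s in a..b, u s * g s) - g a * D := by
      have h1 : ∫ s in a..b, (u s * g s - u s * g a)
          = (∫ s in a..b, u s * g s) - ∫ s in a..b, u s * g a :=
        intervalIntegral.integral_sub hintug hintuga
      have h2 : ∫ s in a..b, u s * g a = D * g a := by
        rw [intervalIntegral.integral_mul_const, ← hDeq]
      calc ∫ s in a..b, u s * (g s - g a)
          = ∫ s in a..b, (u s * g s - u s * g a) := by simp only [mul_sub]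
        _ = (∫ s in a..b, u s * g s) - g a * D := by rw [h1, h2]; ring
    have bound1 : |∫ s in a..b, u s * (g s - g a)| ≤ ε₀ * D := by
      have hb1 : ∀ᵐ s ∂(volume.restrict (Set.uIoc a b)), ‖u s * (g s - g a)‖ ≤ u s * ε₀ := by
        rw [uIoc_of_le hab]
        refine (ae_restrict_iff' measurableSet_Ioc).2 (ae_of_all _ ?_)
        intro s hs
        have hsu : 0 ≤ u s := hu0 s ⟨hai.1.trans hs.1.le, hs.2.trans hbi.2⟩
        have hgs := hgb s ⟨hs.1.le, hs.2⟩
        rw [Real.norm_eq_abs, abs_mul, abs_of_nonneg hsu]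
        exact mul_le_mul_of_nonneg_left hgs hsu
      have hbd := intervalIntegral.norm_integral_le_abs_of_norm_le hb1 (hintu.mul_const ε₀)
      rw [Real.norm_eq_abs, intervalIntegral.integral_mul_const, ← hDeq,
        abs_of_nonneg (mul_nonneg hD0 hε₀.le)] at hbd
      linarith [hbd]
    have E2 : (∫ y in F b..F a, φ' y) = φ (F a) - φ (F b) :=
      intervalIntegral.integral_eq_sub_of_hasDerivAt (fun y _ => hφ y)
        (hφ'.intervalIntegrable _ _)
    have E3 : ∫ y in F b..F a, (φ' y - g a)
        = (φ (F a) - φ (F b)) - g a * D := by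
      rw [intervalIntegral.integral_sub (hφ'.intervalIntegrable _ _) intervalIntegrable_const,
        E2, intervalIntegral.integral_const, smul_eq_mul, hD]
      ring
    have bound2 : |∫ y in F b..F a, (φ' y - g a)| ≤ ε₀ * D := by
      have hFba : F b ≤ F a := by linarith
      have hbd := intervalIntegral.norm_integral_le_of_norm_le_const
        (a := F b) (b := F a) (C := ε₀) (f := fun y => φ' y - g a) ?_
      · rw [Real.norm_eq_abs] at hbd
        have : |F a - F b| = D := by
          rw [abs_of_nonneg (by linarith), ← hD]
        rw [this] at hbd
        exact hbd
      · intro y hy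
        rw [uIoc_of_le hFba] at hy
        exact hφ'b y (Ioc_subset_Icc_self hy)
    calc |(∫ s in a..b, u s * g s) - (φ (F a) - φ (F b))|
        ≤ |(∫ s in a..b, u s * g s) - g a * D|
          + |g a * D - (φ (F a) - φ (F b))| := abs_sub_le _ _ _
      _ ≤ ε₀ * D + ε₀ * D := by
          refine add_le_add ?_ ?_
          · rw [← E1]; exact bound1
          · rw [abs_sub_comm, ← E3]; exact bound2
      _ = 2 * ε₀ * D := by ring
  have hsplit : (∫ s in t..T, u s * g s)
      = ∑ i ∈ Finset.range N, ∫ s in x i..x (i + 1), u s * g s := by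
    rw [intervalIntegral.sum_integral_adjacent_intervals
      (fun i hi => hug _ _ (hxmem i hi.le) (hxmem (i + 1) hi)), hx0, hxN]
  have htel : φ (F t) - φ (F T)
      = ∑ i ∈ Finset.range N, (φ (F (x i)) - φ (F (x (i + 1)))) := by
    rw [Finset.sum_range_sub' (fun i => φ (F (x i))) N, hx0, hxN]
  have htelF : ∑ i ∈ Finset.range N, (F (x i) - F (x (i + 1))) = C := by
    rw [Finset.sum_range_sub' (fun i => F (x i)) N, hx0, hxN, hFT, hC]
    ring
  have hmain : |(∫ s in t..T, u s * g s) - (φ (F t) - φ (F T))| ≤ 2 * ε₀ * C := by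
    rw [hsplit, htel, ← Finset.sum_sub_distrib]
    calc |∑ i ∈ Finset.range N,
          ((∫ s in x i..x (i + 1), u s * g s) - (φ (F (x i)) - φ (F (x (i + 1)))))|
        ≤ ∑ i ∈ Finset.range N,
          |(∫ s in x i..x (i + 1), u s * g s) - (φ (F (x i)) - φ (F (x (i + 1))))| :=
          Finset.abs_sum_le_sum_abs _ _
      _ ≤ ∑ i ∈ Finset.range N, 2 * ε₀ * (F (x i) - F (x (i + 1))) :=
          Finset.sum_le_sum (fun i hi => piece i (Finset.mem_range.1 hi))
      _ = 2 * ε₀ * C := by rw [← Finset.mul_sum, htelF]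
  have hfin : 2 * ε₀ * C ≤ ε := by
    have h2 : ε₀ * (2 * C + 1) = ε := div_mul_cancel₀ ε (by linarith)
    nlinarith [hε₀.le]
  rw [hFT] at hmain
  show |(∫ s in t..T, u s * g s) - (φ (F t) - φ 0)| ≤ ε
  linarith

theorem stmt_3 (T : ℝ) (hT : 0 ≤ T) (u : ℝ → ℝ)
    (hu : MeasureTheory.IntegrableOn u (Set.Icc 0 T))
    (hu0 : ∀ s ∈ Set.Icc 0 T, 0 ≤ u s)
    (b : ℝ) (hb : 0 < b) (hb' : b ≤ Real.exp (-1)) :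
    ∀ t ∈ Set.Icc 0 T,
      (0 < b ^ Real.exp (∫ s in t..T, u s)) ∧
      b ^ Real.exp (∫ s in t..T, u s) ≤ b ∧
      b ^ Real.exp (∫ s in t..T, u s) =
        b + ∫ s in t..T, u s * (b ^ Real.exp (∫ r in s..T, u r)) *
          Real.log (b ^ Real.exp (∫ r in s..T, u r)) := by
  intro t ht
  have htT : t ≤ T := ht.2
  have hF0 : 0 ≤ ∫ s in t..T, u s :=
    intervalIntegral.integral_nonneg htT (fun s hs => hu0 s ⟨ht.1.trans hs.1, hs.2⟩)
  have hexp1 : 1 ≤ Real.exp (∫ s in t..T, u s) := Real.one_le_exp hF0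
  refine ⟨Real.rpow_pos_of_pos hb _, ?_, ?_⟩
  · have hb1 : b ≤ 1 := hb'.trans (by
      rw [Real.exp_le_one_iff]
      norm_num)
    calc b ^ Real.exp (∫ s in t..T, u s) ≤ b ^ (1 : ℝ) :=
        Real.rpow_le_rpow_of_exponent_ge hb hb1 hexp1
      _ = b := Real.rpow_one b
  · set c := Real.log b with hc
    set φ : ℝ → ℝ := fun x => Real.exp (c * Real.exp x) with hφdef
    set φ' : ℝ → ℝ := fun x => c * Real.exp x * Real.exp (c * Real.exp x) with hφ'def
    have hd : ∀ x, HasDerivAt φ (φ' x) x := by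
      intro x
      have h1 : HasDerivAt (fun y : ℝ => c * Real.exp y) (c * Real.exp x) x :=
        (Real.hasDerivAt_exp x).const_mul c
      have h2 := (Real.hasDerivAt_exp (c * Real.exp x)).comp x h1
      simpa [hφdef, hφ'def, mul_comm, Function.comp_def] using h2
    have hcont : Continuous φ' := by
      simp only [hφ'def]
      continuity
    have keyeq := key_ftc t T htT u (hu.mono_set (Icc_subset_Icc ht.1 le_rfl))
      (fun s hs => hu0 s ⟨ht.1.trans hs.1, hs.2⟩) φ φ' hd hcont
    have hintegrand : ∀ s : ℝ,
        u s * (b ^ Real.exp (∫ r in s..T, u r)) * Real.log (b ^ Real.exp (∫ r in s..T, u r))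
          = u s * φ' (∫ r in s..T, u r) := by
      intro s
      rw [Real.log_rpow hb, Real.rpow_def_of_pos hb]
      simp only [hφ'def, hc]
      ring
    rw [Real.rpow_def_of_pos hb]
    simp only [hintegrand]
    rw [keyeq]
    simp only [hφdef]
    rw [Real.exp_zero, mul_one, Real.exp_log hb]
    ring
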